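/- arXiv:2001.11748 — 3 statements merged into one kernel-verified Lean document; each statement's English description precedes it below -/
import Mathlib

section
/- Let ρ_AB be a two-qubit quantum state on C^2⊗C^2 and let μ ∈ (0, 1/√3]. If H(ρ_AB) > 1/μ, then ρ_AB is steerable from Bob to Alice and also steerable from Alice to Bob. -/
/-
If Bob's three Pauli measurements admit a local-hidden-state model with weights `p_l` and hidden
states `σ_l`, then Alice's conditional operator for `σ_k` is `∑ p_l b_kl σ_l` with `|b_kl| ≤ 1`,
so `Tr[(σ_k ⊗ σ_k) ρ] = ∑ p_l b_kl Tr(σ_k σ_l)`. The Bloch vector `(Tr(σ_k σ_l))_k` of each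
hidden state has length at most one, so Cauchy–Schwarz gives `H(ρ) ≤ √3 ≤ 1/μ`. Steering from
Alice to Bob reduces to this case by exchanging the two qubits, which leaves `H` invariant.
-/
open Matrix BigOperators
open scoped Kronecker ComplexOrder

noncomputable section

/-- A quantum state (density matrix): positive semidefinite with trace one. -/
def IsState {ι : Type*} [Fintype ι] [DecidableEq ι] (ρ : Matrix ι ι ℂ) : Prop :=
  ρ.PosSemidef ∧ ρ.trace = 1

/-- A POVM: a finite family of positive semidefinite matrices summing to the identity. -/
def IsPOVM {ι : Type*} [Fintype ι] [DecidableEq ι] {m : ℕ}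
    (E : Fin m → Matrix ι ι ℂ) : Prop :=
  (∀ j, (E j).PosSemidef) ∧ (∑ j, E j = 1)

/-- Partial trace over the second tensor factor. -/
def ptraceB {dA dB : ℕ} (ρ : Matrix (Fin dA × Fin dB) (Fin dA × Fin dB) ℂ) :
    Matrix (Fin dA) (Fin dA) ℂ :=
  Matrix.of fun i j => ∑ k : Fin dB, ρ (i, k) (j, k)

/-- Partial trace over the first tensor factor. -/
def ptraceA {dA dB : ℕ} (ρ : Matrix (Fin dA × Fin dB) (Fin dA × Fin dB) ℂ) :
    Matrix (Fin dB) (Fin dB) ℂ :=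
  Matrix.of fun i j => ∑ k : Fin dA, ρ (k, i) (k, j)

/-- Local-hidden-state model for steering from Bob (second factor) to Alice (first factor). -/
def UnsteerableBtoA {dA dB : ℕ} (ρ : Matrix (Fin dA × Fin dB) (Fin dA × Fin dB) ℂ) : Prop :=
  ∃ (L : ℕ) (p : Fin L → ℝ) (σ : Fin L → Matrix (Fin dA) (Fin dA) ℂ),
    (∀ l, 0 ≤ p l) ∧ (∑ l, p l = 1) ∧ (∀ l, IsState (σ l)) ∧
    ∀ (m : ℕ) (E : Fin m → Matrix (Fin dB) (Fin dB) ℂ), IsPOVM E →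
      ∃ q : Fin m → Fin L → ℝ,
        (∀ j l, 0 ≤ q j l) ∧ (∀ l, ∑ j, q j l = 1) ∧
        ∀ j, ptraceB ((1 ⊗ₖ E j) * ρ) = ∑ l, ((p l * q j l : ℝ) : ℂ) • σ l

/-- Local-hidden-state model for steering from Alice (first factor) to Bob (second factor). -/
def UnsteerableAtoB {dA dB : ℕ} (ρ : Matrix (Fin dA × Fin dB) (Fin dA × Fin dB) ℂ) : Prop :=
  ∃ (L : ℕ) (p : Fin L → ℝ) (σ : Fin L → Matrix (Fin dB) (Fin dB) ℂ),
    (∀ l, 0 ≤ p l) ∧ (∑ l, p l = 1) ∧ (∀ l, IsState (σ l)) ∧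
    ∀ (m : ℕ) (E : Fin m → Matrix (Fin dA) (Fin dA) ℂ), IsPOVM E →
      ∃ q : Fin m → Fin L → ℝ,
        (∀ j l, 0 ≤ q j l) ∧ (∀ l, ∑ j, q j l = 1) ∧
        ∀ j, ptraceA ((E j ⊗ₖ 1) * ρ) = ∑ l, ((p l * q j l : ℝ) : ℂ) • σ l

/-- Separable bipartite state: a finite convex combination of product density matrices. -/
def SeparableState {dA dB : ℕ} (τ : Matrix (Fin dA × Fin dB) (Fin dA × Fin dB) ℂ) : Prop :=
  ∃ (m : ℕ) (q : Fin m → ℝ) (α : Fin m → Matrix (Fin dA) (Fin dA) ℂ)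
      (β : Fin m → Matrix (Fin dB) (Fin dB) ℂ),
    (∀ k, 0 ≤ q k) ∧ (∑ k, q k = 1) ∧ (∀ k, IsState (α k)) ∧ (∀ k, IsState (β k)) ∧
    τ = ∑ k, ((q k : ℝ) : ℂ) • (α k ⊗ₖ β k)

/-- A complete set of `d+1` mutually unbiased measurements on ℂ^d with efficiency
parameter `κ` (`1/d < κ ≤ 1`): every pair of the `d+1` POVMs is mutually unbiased. -/
def IsCompleteMUM (d : ℕ) (κ : ℝ) (P : Fin (d+1) → Fin d → Matrix (Fin d) (Fin d) ℂ) : Prop :=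
  ((d : ℝ)⁻¹ < κ ∧ κ ≤ 1) ∧
  (∀ b, IsPOVM (P b)) ∧
  (∀ b n, (P b n).trace = 1) ∧
  (∀ b b' n n', b ≠ b' → (P b n * P b' n').trace = ((d : ℂ))⁻¹) ∧
  (∀ b n n', (P b n * P b n').trace =
    if n = n' then ((κ : ℝ) : ℂ) else (((1 - κ) / ((d : ℝ) - 1) : ℝ) : ℂ))

/-- A general symmetric informationally complete POVM on ℂ^d with efficiency parameter `a`. -/
def IsGSIC (d : ℕ) (a : ℝ) (P : Fin (d^2) → Matrix (Fin d) (Fin d) ℂ) : Prop :=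
  (((d : ℝ)^3)⁻¹ < a ∧ a ≤ ((d : ℝ)^2)⁻¹) ∧
  (∀ j, (P j).PosSemidef) ∧ (∑ j, P j = 1) ∧
  (∀ j, (P j * P j).trace = ((a : ℝ) : ℂ)) ∧
  (∀ j k, j ≠ k → (P j * P k).trace =
    (((1 - (d : ℝ) * a) / ((d : ℝ) * ((d : ℝ)^2 - 1)) : ℝ) : ℂ))

/-- The operators `R_n^(b)` built from a complete set of qubit MUMs: `R_n^(b) = Q_n^(b)`
for `b ≤ 3`, `n ≤ 2`, and `R_n^(b) = I/2` otherwise. -/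
def Rmum (d : ℕ) (Q : Fin 3 → Fin 2 → Matrix (Fin 2) (Fin 2) ℂ)
    (b : Fin (d+1)) (n : Fin d) : Matrix (Fin 2) (Fin 2) ℂ :=
  if hb : (b : ℕ) < 3 then
    if hn : (n : ℕ) < 2 then Q ⟨(b : ℕ), hb⟩ ⟨(n : ℕ), hn⟩ else (2 : ℂ)⁻¹ • 1
  else (2 : ℂ)⁻¹ • 1

/-- The operators `R_j` built from a qubit general SIC-POVM: `R_j = Q_j` for `j ≤ 4`
and `R_j = I/4` otherwise. -/
def Rgsic (d : ℕ) (Q : Fin (2^2) → Matrix (Fin 2) (Fin 2) ℂ)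
    (j : Fin (d^2)) : Matrix (Fin 2) (Fin 2) ℂ :=
  if hj : (j : ℕ) < 4 then Q ⟨(j : ℕ), lt_of_lt_of_eq hj (by norm_num)⟩
  else (4 : ℂ)⁻¹ • 1

/-- The Pauli matrices σ₁, σ₂, σ₃. -/
def pauli : Fin 3 → Matrix (Fin 2) (Fin 2) ℂ
  | 0 => !![0, 1; 1, 0]
  | 1 => !![0, -Complex.I; Complex.I, 0]
  | 2 => !![1, 0; 0, -1]

/-- `H(ρ) = Tr[(σ₁⊗σ₁ − σ₂⊗σ₂ + σ₃⊗σ₃)ρ]` for a two-qubit state. -/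
def Hcorr (ρ : Matrix (Fin 2 × Fin 2) (Fin 2 × Fin 2) ℂ) : ℝ :=
  (((pauli 0 ⊗ₖ pauli 0 - pauli 1 ⊗ₖ pauli 1 + pauli 2 ⊗ₖ pauli 2) * ρ).trace).re

def pauliPOVM (k : Fin 3) : Fin 2 → Matrix (Fin 2) (Fin 2) ℂ :=
  ![(2 : ℂ)⁻¹ • (1 + pauli k), (2 : ℂ)⁻¹ • (1 - pauli k)]

lemma pauliPOVM_zero_sub_one (k : Fin 3) : pauliPOVM k 0 - pauliPOVM k 1 = pauli k := by
  ext i j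
  simp only [pauliPOVM, Matrix.cons_val_zero, Matrix.cons_val_one, Matrix.sub_apply,
    Matrix.smul_apply, Matrix.add_apply, smul_eq_mul]
  ring

lemma isPOVM_pauliPOVM (k : Fin 3) : IsPOVM (pauliPOVM k) := by
  refine ⟨fun j => ?_, ?_⟩
  · suffices h : (pauliPOVM k j)ᴴ * pauliPOVM k j = pauliPOVM k j by
      simpa [h] using posSemidef_conjTranspose_mul_self (pauliPOVM k j)
    fin_cases k <;> fin_cases j <;> ext i i' <;> fin_cases i <;> fin_cases i' <;>
      simp [pauliPOVM, pauli, mul_apply, Fin.sum_univ_two, one_apply, Complex.ext_iff] <;>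
      norm_num
  · ext i j
    fin_cases k <;> fin_cases i <;> fin_cases j <;>
      simp [pauliPOVM, pauli, Fin.sum_univ_two, one_apply, Complex.ext_iff] <;> norm_num

lemma ptraceB_one_kronecker_sub_mul {dA dB : ℕ} (E F : Matrix (Fin dB) (Fin dB) ℂ)
    (ρ : Matrix (Fin dA × Fin dB) (Fin dA × Fin dB) ℂ) :
    ptraceB ((1 ⊗ₖ (E - F)) * ρ) = ptraceB ((1 ⊗ₖ E) * ρ) - ptraceB ((1 ⊗ₖ F) * ρ) := by
  ext i j
  simp [ptraceB, mul_apply, mul_sub, sub_mul, Finset.sum_sub_distrib]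

lemma trace_kronecker_mul_eq_trace_mul_ptraceB {dA dB : ℕ} (A : Matrix (Fin dA) (Fin dA) ℂ)
    (B : Matrix (Fin dB) (Fin dB) ℂ) (ρ : Matrix (Fin dA × Fin dB) (Fin dA × Fin dB) ℂ) :
    ((A ⊗ₖ B) * ρ).trace = (A * ptraceB ((1 ⊗ₖ B) * ρ)).trace := by
  simp only [trace, diag_apply, mul_apply, kroneckerMap_apply, mul_assoc, Fintype.sum_prod_type,
    ptraceB, one_apply, ite_mul, one_mul, zero_mul, Finset.sum_ite_irrel, Finset.sum_const_zero,
    Finset.sum_ite_eq, Finset.mem_univ, if_true, of_apply, Finset.mul_sum]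
  exact Finset.sum_congr rfl fun i _ => Finset.sum_comm

lemma ptraceA_kronecker_one_mul {dA dB : ℕ} (E : Matrix (Fin dA) (Fin dA) ℂ)
    (ρ : Matrix (Fin dA × Fin dB) (Fin dA × Fin dB) ℂ) :
    ptraceA ((E ⊗ₖ 1) * ρ) = ptraceB ((1 ⊗ₖ E) * ρ.submatrix Prod.swap Prod.swap) := by
  ext i j
  simp [ptraceA, ptraceB, mul_apply, Fintype.sum_prod_type, one_apply]

lemma UnsteerableBtoA.exists_binary_response {dA dB n : ℕ}
    {ρ : Matrix (Fin dA × Fin dB) (Fin dA × Fin dB) ℂ} (h : UnsteerableBtoA ρ)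
    (E : Fin n → Fin 2 → Matrix (Fin dB) (Fin dB) ℂ) (hE : ∀ k, IsPOVM (E k)) :
    ∃ (L : ℕ) (p : Fin L → ℝ) (σ : Fin L → Matrix (Fin dA) (Fin dA) ℂ) (b : Fin n → Fin L → ℝ),
      (∀ l, 0 ≤ p l) ∧ (∑ l, p l = 1) ∧ (∀ l, IsState (σ l)) ∧ (∀ k l, |b k l| ≤ 1) ∧
      ∀ k, ptraceB ((1 ⊗ₖ (E k 0 - E k 1)) * ρ) = ∑ l, ((p l * b k l : ℝ) : ℂ) • σ l := by
  obtain ⟨L, p, σ, hp0, hp1, hσ, hmodel⟩ := h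
  choose q hq0 hq1 hq using fun k => hmodel 2 (E k) (hE k)
  refine ⟨L, p, σ, fun k l => q k 0 l - q k 1 l, hp0, hp1, hσ, fun k l => ?_, fun k => ?_⟩
  · have hsum := hq1 k l
    rw [Fin.sum_univ_two] at hsum
    rw [abs_le]
    constructor <;> linarith [hq0 k 0 l, hq0 k 1 l]
  · rw [ptraceB_one_kronecker_sub_mul, hq k 0, hq k 1, ← Finset.sum_sub_distrib]
    refine Finset.sum_congr rfl fun l _ => ?_
    rw [← sub_smul]
    congr 1
    push_cast
    ring

lemma unsteerableAtoB_iff_unsteerableBtoA_submatrix_swap {dA dB : ℕ}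
    (ρ : Matrix (Fin dA × Fin dB) (Fin dA × Fin dB) ℂ) :
    UnsteerableAtoB ρ ↔ UnsteerableBtoA (ρ.submatrix Prod.swap Prod.swap) := by
  simp only [UnsteerableAtoB, UnsteerableBtoA, ptraceA_kronecker_one_mul]

lemma sum_mul_le_sqrt_card {ι : Type*} [Fintype ι] (u v : ι → ℝ) (hu : ∀ i, |u i| ≤ 1)
    (hv : ∑ i, v i ^ 2 ≤ 1) : ∑ i, u i * v i ≤ √(Fintype.card ι) := by
  have hu2 : ∑ i, u i ^ 2 ≤ Fintype.card ι := by
    calc ∑ i, u i ^ 2 ≤ ∑ _i : ι, (1 : ℝ) :=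
          Finset.sum_le_sum fun i _ => (sq_le_one_iff_abs_le_one (u i)).2 (hu i)
      _ = Fintype.card ι := by simp
  calc ∑ i, u i * v i ≤ √(∑ i, u i ^ 2) * √(∑ i, v i ^ 2) :=
        Real.sum_mul_le_sqrt_mul_sqrt _ u v
    _ ≤ √(Fintype.card ι) * 1 := by
        gcongr
        exact Real.sqrt_le_one.2 hv
    _ = √(Fintype.card ι) := mul_one _

lemma IsState.sum_sq_re_trace_pauli_mul_le_one {σ : Matrix (Fin 2) (Fin 2) ℂ}
    (hσ : IsState σ) : ∑ k, ((pauli k * σ).trace.re) ^ 2 ≤ 1 := by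
  obtain ⟨hpsd, htr⟩ := hσ
  have h10 : σ 1 0 = star (σ 0 1) := (hpsd.isHermitian.apply 1 0).symm
  have h00 : (σ 0 0).im = 0 := (Complex.nonneg_iff.1 hpsd.diag_nonneg).2.symm
  have h11 : (σ 1 1).im = 0 := (Complex.nonneg_iff.1 hpsd.diag_nonneg).2.symm
  have hdet : (σ 0 1).re ^ 2 + (σ 0 1).im ^ 2 ≤ (σ 0 0).re * (σ 1 1).re := by
    simpa [det_fin_two, h10, h00, h11, sq] using (Complex.nonneg_iff.1 hpsd.det_nonneg).1
  have htr' : (σ 0 0).re + (σ 1 1).re = 1 := by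
    simpa [trace, Fin.sum_univ_two] using congrArg Complex.re htr
  have hbloch : ∑ k, ((pauli k * σ).trace.re) ^ 2 =
      4 * ((σ 0 1).re ^ 2 + (σ 0 1).im ^ 2) + ((σ 0 0).re - (σ 1 1).re) ^ 2 := by
    simp [Fin.sum_univ_three, pauli, trace, Fin.sum_univ_two, mul_apply, h10, h00, h11]
    ring
  -- the right-hand side is `(Tr σ)² - 4 det σ`
  rw [hbloch]
  nlinarith

lemma Hcorr_eq_sum (ρ : Matrix (Fin 2 × Fin 2) (Fin 2 × Fin 2) ℂ) :
    Hcorr ρ = ∑ k, ![1, -1, 1] k * (((pauli k ⊗ₖ pauli k) * ρ).trace).re := by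
  simp only [Hcorr, add_mul, sub_mul, trace_add, trace_sub, Complex.add_re, Complex.sub_re,
    Fin.sum_univ_three, cons_val_zero, cons_val_one, cons_val, one_mul, neg_mul]
  ring

lemma trace_kronecker_self_mul_submatrix_swap (A : Matrix (Fin 2) (Fin 2) ℂ)
    (ρ : Matrix (Fin 2 × Fin 2) (Fin 2 × Fin 2) ℂ) :
    ((A ⊗ₖ A) * ρ.submatrix Prod.swap Prod.swap).trace = ((A ⊗ₖ A) * ρ).trace := by
  simp only [trace, diag, mul_apply, Fintype.sum_prod_type, submatrix_apply, Prod.swap_prod_mk,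
    kroneckerMap_apply]
  rw [Finset.sum_comm]
  refine Finset.sum_congr rfl fun i _ => Finset.sum_congr rfl fun k _ => ?_
  rw [Finset.sum_comm]
  simp only [mul_comm (A _ _) (A _ _)]

lemma Hcorr_submatrix_swap (ρ : Matrix (Fin 2 × Fin 2) (Fin 2 × Fin 2) ℂ) :
    Hcorr (ρ.submatrix Prod.swap Prod.swap) = Hcorr ρ := by
  simp only [Hcorr_eq_sum, trace_kronecker_self_mul_submatrix_swap]

lemma Hcorr_le_sqrt_three_of_unsteerableBtoA {ρ : Matrix (Fin 2 × Fin 2) (Fin 2 × Fin 2) ℂ}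
    (h : UnsteerableBtoA ρ) : Hcorr ρ ≤ √3 := by
  obtain ⟨L, p, σ, b, hp0, hp1, hσ, hb, hresp⟩ :=
    h.exists_binary_response pauliPOVM isPOVM_pauliPOVM
  simp only [pauliPOVM_zero_sub_one] at hresp
  have hcorr : ∀ k, (((pauli k ⊗ₖ pauli k) * ρ).trace).re =
      ∑ l, p l * (b k l * ((pauli k * σ l).trace).re) := by
    intro k
    simp [trace_kronecker_mul_eq_trace_mul_ptraceB, hresp, Matrix.mul_sum, trace_sum,
      Complex.re_sum, mul_assoc]
  calc Hcorr ρ = ∑ l, p l * ∑ k, (![1, -1, 1] k * b k l) * ((pauli k * σ l).trace).re := by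
        simp only [Hcorr_eq_sum, hcorr, Finset.mul_sum]
        rw [Finset.sum_comm]
        exact Finset.sum_congr rfl fun l _ => Finset.sum_congr rfl fun k _ => by ring
    _ ≤ ∑ l, p l * √(Fintype.card (Fin 3)) := by
        refine Finset.sum_le_sum fun l _ => mul_le_mul_of_nonneg_left ?_ (hp0 l)
        refine sum_mul_le_sqrt_card _ _ (fun k => ?_) (hσ l).sum_sq_re_trace_pauli_mul_le_one
        fin_cases k <;> simpa using hb _ l
    _ = √3 := by simp [← Finset.sum_mul, hp1]

theorem steering_two_qubit_Hcorr_general (μ : ℝ) (hμ : μ ∈ Set.Ioc (0 : ℝ) (1 / Real.sqrt 3))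
    (ρAB : Matrix (Fin 2 × Fin 2) (Fin 2 × Fin 2) ℂ)
    (hH : Hcorr ρAB > 1 / μ) :
    ¬ UnsteerableBtoA ρAB ∧ ¬ UnsteerableAtoB ρAB := by
  obtain ⟨hμ0, hμ1⟩ := hμ
  have hsqrt : √3 < Hcorr ρAB := by
    refine lt_of_le_of_lt ?_ hH
    rw [le_div_iff₀ hμ0, ← le_div_iff₀' (by positivity)]
    exact hμ1
  refine ⟨fun h => ?_, fun h => ?_⟩
  · exact (Hcorr_le_sqrt_three_of_unsteerableBtoA h).not_gt hsqrt
  · rw [unsteerableAtoB_iff_unsteerableBtoA_submatrix_swap] at h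
    rw [← Hcorr_submatrix_swap] at hsqrt
    exact (Hcorr_le_sqrt_three_of_unsteerableBtoA h).not_gt hsqrt

/-- Corollary 1: for a two-qubit state, `H(ρ) > 1/μ` implies both-way steerability. -/
theorem steering_two_qubit_Hcorr (μ : ℝ) (hμ : μ ∈ Set.Ioc (0 : ℝ) (1 / Real.sqrt 3))
    (ρAB : Matrix (Fin 2 × Fin 2) (Fin 2 × Fin 2) ℂ) (hρ : IsState ρAB)
    (hH : Hcorr ρAB > 1 / μ) :
    ¬ UnsteerableBtoA ρAB ∧ ¬ UnsteerableAtoB ρAB :=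
  steering_two_qubit_Hcorr_general μ hμ ρAB hH
end
end

section
/- Let d ≥ 2, let ρ_AB be a bipartite quantum state on C^d⊗C^2 with reduced state ρ_A = Tr_B[ρ_AB], let {P^(b)}_{b=1}^{d+1} be a complete set of MUMs on C^d with efficiency parameter κ1, let {Q^(b)}_{b=1}^{3} be a complete set of MUMs on C^2 with efficiency parameter κ2, and let μ ∈ (0, 1/√3]. Assume that every separable state σ on C^d⊗C^2 satisfies J(σ) ≤ √(κ1+1)·√(κ2+1+(d+3)(d−2)/4). If J(ρ_AB) > √(κ1+1)·√(4κ2+4+(d+3)(d−2))/(2μ) − (d+1)(1−μ)/(2μ), then the state τ_AB = μ ρ_AB + (1−μ) ρ_A ⊗ (I_2/2) is entangled (not separable). -/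
/-! The witness `J` is real-affine in the state. On `ρ_A ⊗ I/2` it equals `(d+1)/2`, since
each `P^(b)` sums to the identity and every `R_n^(b)` has unit trace, so
`J(τ) = μ J(ρ) + (1-μ)(d+1)/2`. The hypothesis on `J(ρ)` says exactly that this exceeds the
separability bound. -/

open Matrix BigOperators
open scoped Kronecker ComplexOrder

noncomputable section

lemma trace_ptraceB {dA dB : ℕ} (ρ : Matrix (Fin dA × Fin dB) (Fin dA × Fin dB) ℂ) :
    (ptraceB ρ).trace = ρ.trace := by
  simp [Matrix.trace, ptraceB, Fintype.sum_prod_type]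

lemma trace_Rmum {d : ℕ} {Q : Fin 3 → Fin 2 → Matrix (Fin 2) (Fin 2) ℂ}
    (hQ : ∀ b n, (Q b n).trace = 1) (b : Fin (d + 1)) (n : Fin d) :
    (Rmum d Q b n).trace = 1 := by
  unfold Rmum
  split_ifs <;> simp [hQ]

lemma re_trace_mul_ofReal_smul_add {m : Type*} [Fintype m] (W σ τ : Matrix m m ℂ) (a b : ℝ) :
    ((W * ((a : ℂ) • σ + (b : ℂ) • τ)).trace).re =
      a * ((W * σ).trace).re + b * ((W * τ).trace).re := by
  simp [mul_add, Matrix.trace_add, Matrix.trace_smul]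

lemma sum_sum_re_trace_mul_ofReal_smul_add {β ν m : Type*} [Fintype β] [Fintype ν] [Fintype m]
    (W : β → ν → Matrix m m ℂ) (σ τ : Matrix m m ℂ) (a b : ℝ) :
    ∑ i, ∑ j, ((W i j * ((a : ℂ) • σ + (b : ℂ) • τ)).trace).re =
      a * ∑ i, ∑ j, ((W i j * σ).trace).re + b * ∑ i, ∑ j, ((W i j * τ).trace).re := by
  simp only [re_trace_mul_ofReal_smul_add, Finset.sum_add_distrib, Finset.mul_sum]

lemma sum_trace_kronecker_mul_kronecker_smul_one {ι m n : Type*} [Fintype ι] [Fintype m]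
    [Fintype n] [DecidableEq m] [DecidableEq n] {E : ι → Matrix m m ℂ} (hE : ∑ i, E i = 1)
    {R : ι → Matrix n n ℂ} (hR : ∀ i, (R i).trace = 1) (X : Matrix m m ℂ) (c : ℂ) :
    ∑ i, ((E i ⊗ₖ R i) * (X ⊗ₖ (c • 1))).trace = c * X.trace := by
  simp only [← Matrix.mul_kronecker_mul, Matrix.trace_kronecker, Matrix.mul_smul,
    Matrix.trace_smul, hR, smul_eq_mul, mul_one]
  rw [← Finset.sum_mul, ← Matrix.trace_sum, ← Finset.sum_mul, hE, one_mul, mul_comm]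

lemma sum_sum_re_trace_mum_kronecker_maximallyMixed {d : ℕ}
    {P : Fin (d + 1) → Fin d → Matrix (Fin d) (Fin d) ℂ} (hP : ∀ b, ∑ n, P b n = 1)
    {Q : Fin 3 → Fin 2 → Matrix (Fin 2) (Fin 2) ℂ} (hQ : ∀ b n, (Q b n).trace = 1)
    {X : Matrix (Fin d) (Fin d) ℂ} (hX : X.trace = 1) :
    ∑ b, ∑ n, (((P b n ⊗ₖ Rmum d Q b n) * (X ⊗ₖ ((2 : ℂ)⁻¹ • 1))).trace).re =
      ((d : ℝ) + 1) / 2 := by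
  simp only [← Complex.re_sum, sum_trace_kronecker_mul_kronecker_smul_one (hP _) (trace_Rmum hQ _),
    hX, Finset.sum_const, Finset.card_univ, Fintype.card_fin]
  norm_num [nsmul_eq_mul, div_eq_mul_inv]

theorem entangled_mixture_MUM_qudit_qubit_general (d : ℕ) (κ1 κ2 μ : ℝ)
    (hμ : μ ∈ Set.Ioc (0 : ℝ) (1 / Real.sqrt 3))
    (ρAB : Matrix (Fin d × Fin 2) (Fin d × Fin 2) ℂ) (hρ : IsState ρAB)
    (P : Fin (d+1) → Fin d → Matrix (Fin d) (Fin d) ℂ)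
    (Q : Fin 3 → Fin 2 → Matrix (Fin 2) (Fin 2) ℂ)
    (hP : IsCompleteMUM d κ1 P) (hQ : IsCompleteMUM 2 κ2 Q)
    (hsep : ∀ σ : Matrix (Fin d × Fin 2) (Fin d × Fin 2) ℂ, SeparableState σ →
      ∑ b, ∑ n, (((P b n ⊗ₖ Rmum d Q b n) * σ).trace).re ≤
        Real.sqrt (κ1 + 1) * Real.sqrt (κ2 + 1 + ((d : ℝ) + 3) * ((d : ℝ) - 2) / 4))
    (hJ : ∑ b, ∑ n, (((P b n ⊗ₖ Rmum d Q b n) * ρAB).trace).re >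
      Real.sqrt (κ1 + 1) * Real.sqrt (4 * κ2 + 4 + ((d : ℝ) + 3) * ((d : ℝ) - 2)) / (2 * μ)
        - ((d : ℝ) + 1) * (1 - μ) / (2 * μ)) :
    ¬ SeparableState ((μ : ℂ) • ρAB + ((1 - μ : ℝ) : ℂ) • (ptraceB ρAB ⊗ₖ ((2 : ℂ)⁻¹ • 1))) := by
  obtain ⟨hμ0, -⟩ := hμ
  obtain ⟨-, hPpovm, -⟩ := hP
  obtain ⟨-, -, hQtrace, -⟩ := hQ
  intro hτ
  have hJτ := hsep _ hτ
  rw [sum_sum_re_trace_mul_ofReal_smul_add, sum_sum_re_trace_mum_kronecker_maximallyMixed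
    (fun b => (hPpovm b).2) hQtrace ((trace_ptraceB ρAB).trans hρ.2)] at hJτ
  set s := Real.sqrt (κ2 + 1 + ((d : ℝ) + 3) * ((d : ℝ) - 2) / 4)
  have hs : Real.sqrt (4 * κ2 + 4 + ((d : ℝ) + 3) * ((d : ℝ) - 2)) = 2 * s := by
    rw [show 4 * κ2 + 4 + ((d : ℝ) + 3) * ((d : ℝ) - 2) =
        2 ^ 2 * (κ2 + 1 + ((d : ℝ) + 3) * ((d : ℝ) - 2) / 4) by ring,
      Real.sqrt_mul (by positivity), Real.sqrt_sq zero_le_two]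
  have hJ' : (Real.sqrt (κ1 + 1) * s - ((d : ℝ) + 1) * (1 - μ) / 2) / μ <
      ∑ b, ∑ n, (((P b n ⊗ₖ Rmum d Q b n) * ρAB).trace).re := by
    convert hJ using 1
    rw [hs]
    field_simp
  linarith [(div_lt_iff₀ hμ0).mp hJ']

/-- If the MUM separability bound holds and `J(ρ)` exceeds the steering threshold, then
`τ = μ ρ + (1−μ) ρ_A ⊗ I/2` is entangled (qudit-qubit case). -/
theorem entangled_mixture_MUM_qudit_qubit (d : ℕ) (hd : 2 ≤ d) (κ1 κ2 μ : ℝ)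
    (hμ : μ ∈ Set.Ioc (0 : ℝ) (1 / Real.sqrt 3))
    (ρAB : Matrix (Fin d × Fin 2) (Fin d × Fin 2) ℂ) (hρ : IsState ρAB)
    (P : Fin (d+1) → Fin d → Matrix (Fin d) (Fin d) ℂ)
    (Q : Fin 3 → Fin 2 → Matrix (Fin 2) (Fin 2) ℂ)
    (hP : IsCompleteMUM d κ1 P) (hQ : IsCompleteMUM 2 κ2 Q)
    (hsep : ∀ σ : Matrix (Fin d × Fin 2) (Fin d × Fin 2) ℂ, SeparableState σ →
      ∑ b, ∑ n, (((P b n ⊗ₖ Rmum d Q b n) * σ).trace).re ≤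
        Real.sqrt (κ1 + 1) * Real.sqrt (κ2 + 1 + ((d : ℝ) + 3) * ((d : ℝ) - 2) / 4))
    (hJ : ∑ b, ∑ n, (((P b n ⊗ₖ Rmum d Q b n) * ρAB).trace).re >
      Real.sqrt (κ1 + 1) * Real.sqrt (4 * κ2 + 4 + ((d : ℝ) + 3) * ((d : ℝ) - 2)) / (2 * μ)
        - ((d : ℝ) + 1) * (1 - μ) / (2 * μ)) :
    ¬ SeparableState ((μ : ℂ) • ρAB + ((1 - μ : ℝ) : ℂ) • (ptraceB ρAB ⊗ₖ ((2 : ℂ)⁻¹ • 1))) :=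
  entangled_mixture_MUM_qudit_qubit_general d κ1 κ2 μ hμ ρAB hρ P Q hP hQ hsep hJ
end
end

section
/- Let κ ∈ (1/2, 1], set s = √(2κ−1), and for b = 1,2,3 define the 2×2 matrices P_1^(b) = (I + s σ_b)/2 and P_2^(b) = (I − s σ_b)/2, where σ_1, σ_2, σ_3 are the Pauli matrices; these three pairs {P_1^(b), P_2^(b)} form a complete set of three MUMs on C^2 with efficiency parameter κ, and so do their entrywise complex conjugates {conj(P_1^(b)), conj(P_2^(b))}. Then for every two-qubit state ρ on C^2⊗C^2, ∑_{b=1}^{3} ∑_{n=1}^{2} Tr[(P_n^(b) ⊗ conj(P_n^(b))) ρ] = (3 + (2κ−1) H(ρ))/2. -/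
open Matrix BigOperators
open scoped Kronecker ComplexOrder

noncomputable section

/-- The qubit MUMs `P_n^(b) = (I ± √(2κ−1) σ_b)/2` built from the Pauli matrices. -/
def mumP (κ : ℝ) (b : Fin 3) (n : Fin 2) : Matrix (Fin 2) (Fin 2) ℂ :=
  (2 : ℂ)⁻¹ • (1 + (if n = 0 then ((Real.sqrt (2 * κ - 1) : ℝ) : ℂ)
    else -((Real.sqrt (2 * κ - 1) : ℝ) : ℂ)) • pauli b)


/-! Each `P_n^(b) = (1 ± s σ_b)/2` is a convex combination of the two spectral projections
`(1 ± σ_b)/2` of the Hermitian involution `σ_b`, hence positive semidefinite, and the MUM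
relations follow from `Tr σ_b = 0` and `Tr (σ_b σ_b') = 2 δ_bb'`. Since each `P_n^(b)` is
Hermitian, its entrywise conjugate is its transpose, and transposition preserves all the MUM
relations. In `∑_n P_n^(b) ⊗ conj P_n^(b)` the cross terms cancel, leaving
`(1 + s² σ_b ⊗ conj σ_b)/2`; as `conj σ₂ = -σ₂` while `σ₁, σ₃` are real, summing over `b`
produces exactly the correlation operator of `H`. -/

namespace Matrix

variable {n : Type*}

lemma IsHermitian.map_starRingEnd_eq_transpose {R : Type*} [CommSemiring R] [StarRing R]
    {A : Matrix n n R} (hA : A.IsHermitian) : A.map (starRingEnd R) = Aᵀ := by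
  ext i j
  exact hA.apply j i

variable [Fintype n]

lemma IsHermitian.ofReal_re_trace_mul {A B : Matrix n n ℂ} (hA : A.IsHermitian)
    (hB : B.IsHermitian) : (((A * B).trace.re : ℝ) : ℂ) = (A * B).trace := by
  refine Complex.conj_eq_iff_re.mp ?_
  rw [← Complex.star_def, ← trace_conjTranspose, conjTranspose_mul, hA.eq, hB.eq,
    trace_mul_comm]

variable [DecidableEq n]

lemma posSemidef_one_add_of_mul_self_eq_one {U : Matrix n n ℂ} (hU : U.IsHermitian)
    (hUU : U * U = 1) : (1 + U).PosSemidef := by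
  have hsq : (1 + U)ᴴ * (1 + U) = (2 : ℝ) • (1 + U) := by
    rw [conjTranspose_add, conjTranspose_one, hU.eq]
    simp only [add_mul, mul_add, one_mul, mul_one, hUU]
    module
  have h := (posSemidef_conjTranspose_mul_self (1 + U)).smul (show (0 : ℝ) ≤ 2⁻¹ by norm_num)
  rwa [hsq, smul_smul, inv_mul_cancel₀ two_ne_zero, one_smul] at h

lemma posSemidef_one_add_smul_of_mul_self_eq_one {U : Matrix n n ℂ} (hU : U.IsHermitian)
    (hUU : U * U = 1) {t : ℝ} (ht : |t| ≤ 1) : (1 + (t : ℂ) • U).PosSemidef := by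
  obtain ⟨ht₁, ht₂⟩ := abs_le.mp ht
  have hsplit : 1 + (t : ℂ) • U = ((1 + t) / 2 : ℝ) • (1 + U) + ((1 - t) / 2 : ℝ) • (1 + -U) := by
    rw [← Complex.coe_smul]
    module
  rw [hsplit]
  exact ((posSemidef_one_add_of_mul_self_eq_one hU hUU).smul (by linarith)).add
    ((posSemidef_one_add_of_mul_self_eq_one hU.neg (by simpa using hUU)).smul (by linarith))

end Matrix

section CompleteMUM

variable {d : ℕ} {κ : ℝ} {P : Fin (d + 1) → Fin d → Matrix (Fin d) (Fin d) ℂ}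

lemma IsCompleteMUM.transpose (h : IsCompleteMUM d κ P) :
    IsCompleteMUM d κ (fun b n => (P b n)ᵀ) := by
  obtain ⟨hκ, hPOVM, htrace, hcross, hsame⟩ := h
  refine ⟨hκ, fun b => ⟨fun n => ((hPOVM b).1 n).transpose, ?_⟩,
    fun b n => (trace_transpose _).trans (htrace b n), fun b b' n n' hb => ?_, fun b n n' => ?_⟩
  · rw [← transpose_sum, (hPOVM b).2, transpose_one]
  · simpa only [trace_transpose_mul] using hcross b b' n n' hb
  · simpa only [trace_transpose_mul] using hsame b n n'

lemma IsCompleteMUM.map_conj (h : IsCompleteMUM d κ P) :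
    IsCompleteMUM d κ (fun b n => (P b n).map (starRingEnd ℂ)) := by
  have hconj : (fun b n => (P b n).map (starRingEnd ℂ)) = fun b n => (P b n)ᵀ :=
    funext₂ fun b n => (h.2.1 b).1 n |>.isHermitian.map_starRingEnd_eq_transpose
  exact hconj ▸ h.transpose

end CompleteMUM

section Pauli

lemma isHermitian_pauli (b : Fin 3) : (pauli b).IsHermitian := by
  fin_cases b <;> ext i j <;> fin_cases i <;> fin_cases j <;> simp [pauli]

lemma pauli_mul_self (b : Fin 3) : pauli b * pauli b = 1 := by
  fin_cases b <;> ext i j <;> fin_cases i <;> fin_cases j <;> simp [pauli, mul_apply]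

lemma trace_pauli (b : Fin 3) : (pauli b).trace = 0 := by
  fin_cases b <;> simp [pauli, trace_fin_two]

lemma trace_pauli_mul_pauli (b b' : Fin 3) :
    (pauli b * pauli b').trace = if b = b' then 2 else 0 := by
  fin_cases b <;> fin_cases b' <;> simp [pauli, trace_fin_two] <;> norm_num

lemma sum_pauli_kronecker_transpose :
    ∑ b, pauli b ⊗ₖ (pauli b)ᵀ = pauli 0 ⊗ₖ pauli 0 - pauli 1 ⊗ₖ pauli 1 + pauli 2 ⊗ₖ pauli 2 := by
  have h₀ : (pauli 0)ᵀ = pauli 0 := by ext i j; fin_cases i <;> fin_cases j <;> simp [pauli]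
  have h₁ : (pauli 1)ᵀ = -pauli 1 := by ext i j; fin_cases i <;> fin_cases j <;> simp [pauli]
  have h₂ : (pauli 2)ᵀ = pauli 2 := by ext i j; fin_cases i <;> fin_cases j <;> simp [pauli]
  rw [Fin.sum_univ_three, h₀, h₁, h₂, ← neg_one_smul ℂ (pauli 1), kronecker_smul]
  module

lemma ofReal_Hcorr {ρ : Matrix (Fin 2 × Fin 2) (Fin 2 × Fin 2) ℂ} (hρ : ρ.IsHermitian) :
    (Hcorr ρ : ℂ) = ((pauli 0 ⊗ₖ pauli 0 - pauli 1 ⊗ₖ pauli 1 + pauli 2 ⊗ₖ pauli 2) * ρ).trace := by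
  refine IsHermitian.ofReal_re_trace_mul ?_ hρ
  simp only [IsHermitian, conjTranspose_add, conjTranspose_sub, conjTranspose_kronecker,
    (isHermitian_pauli _).eq]

end Pauli

section BlochForm

variable {m n : Type*} [DecidableEq n]

lemma trace_half_one_add_smul_mul [Fintype n] {σ τ : Matrix n n ℂ} (hσ : σ.trace = 0)
    (hτ : τ.trace = 0) (a c : ℂ) :
    ((2⁻¹ : ℂ) • (1 + a • σ) * ((2⁻¹ : ℂ) • (1 + c • τ))).trace
      = (Fintype.card n + a * c * (σ * τ).trace) / 4 := by
  simp only [Matrix.smul_mul, Matrix.mul_smul, add_mul, mul_add, one_mul, mul_one, trace_smul,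
    trace_add, trace_one, hσ, hτ, smul_eq_mul]
  ring

lemma half_one_add_smul_kronecker_add_neg [DecidableEq m] (A : Matrix m m ℂ)
    (B : Matrix n n ℂ) (a c : ℂ) :
    ((2⁻¹ : ℂ) • (1 + a • A)) ⊗ₖ ((2⁻¹ : ℂ) • (1 + c • B))
        + ((2⁻¹ : ℂ) • (1 + (-a) • A)) ⊗ₖ ((2⁻¹ : ℂ) • (1 + (-c) • B))
      = (2⁻¹ : ℂ) • (1 + (a * c) • (A ⊗ₖ B)) := by
  simp only [smul_kronecker, kronecker_smul, add_kronecker, kronecker_add, one_kronecker_one,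
    smul_smul]
  module

end BlochForm

section PauliMUM

def blochCoeff (κ : ℝ) (n : Fin 2) : ℝ :=
  if n = 0 then √(2 * κ - 1) else -√(2 * κ - 1)

lemma mumP_eq (κ : ℝ) (b : Fin 3) (n : Fin 2) :
    mumP κ b n = (2⁻¹ : ℂ) • (1 + (blochCoeff κ n : ℂ) • pauli b) := by
  unfold mumP blochCoeff
  split_ifs <;> push_cast <;> rfl

lemma abs_blochCoeff_le_one {κ : ℝ} (hκ : κ ≤ 1) (n : Fin 2) : |blochCoeff κ n| ≤ 1 := by
  have : √(2 * κ - 1) ≤ 1 := Real.sqrt_le_one.mpr (by linarith)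
  unfold blochCoeff
  split_ifs <;> simpa [abs_of_nonneg (Real.sqrt_nonneg _)] using this

lemma blochCoeff_one (κ : ℝ) : blochCoeff κ 1 = -blochCoeff κ 0 := rfl

lemma blochCoeff_mul_blochCoeff {κ : ℝ} (hκ : 1 / 2 ≤ κ) (n n' : Fin 2) :
    blochCoeff κ n * blochCoeff κ n' = if n = n' then 2 * κ - 1 else -(2 * κ - 1) := by
  have h := Real.mul_self_sqrt (show 0 ≤ 2 * κ - 1 by linarith)
  fin_cases n <;> fin_cases n' <;> simp [blochCoeff, h]

lemma isHermitian_mumP (κ : ℝ) (b : Fin 3) (n : Fin 2) : (mumP κ b n).IsHermitian := by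
  rw [mumP_eq]
  exact (isHermitian_one.add ((isHermitian_pauli b).smul (Complex.conj_ofReal _))).smul
    (by simp [IsSelfAdjoint])

lemma posSemidef_mumP {κ : ℝ} (hκ : κ ≤ 1) (b : Fin 3) (n : Fin 2) : (mumP κ b n).PosSemidef := by
  rw [mumP_eq]
  exact (posSemidef_one_add_smul_of_mul_self_eq_one (isHermitian_pauli b) (pauli_mul_self b)
    (abs_blochCoeff_le_one hκ n)).smul (by positivity)

lemma sum_mumP (κ : ℝ) (b : Fin 3) : ∑ n, mumP κ b n = 1 := by
  simp only [Fin.sum_univ_two, mumP_eq, blochCoeff_one, Complex.ofReal_neg]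
  module

lemma trace_mumP (κ : ℝ) (b : Fin 3) (n : Fin 2) : (mumP κ b n).trace = 1 := by
  simp [mumP_eq, trace_pauli]

lemma trace_mumP_mul_mumP (κ : ℝ) (b b' : Fin 3) (n n' : Fin 2) :
    (mumP κ b n * mumP κ b' n').trace
      = (2 + blochCoeff κ n * blochCoeff κ n' * (pauli b * pauli b').trace) / 4 := by
  rw [mumP_eq, mumP_eq, trace_half_one_add_smul_mul (trace_pauli b) (trace_pauli b')]
  simp

lemma isCompleteMUM_mumP {κ : ℝ} (hκ : κ ∈ Set.Ioc (1 / 2 : ℝ) 1) : IsCompleteMUM 2 κ (mumP κ) := by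
  refine ⟨⟨by norm_num [hκ.1], hκ.2⟩, fun b => ⟨posSemidef_mumP hκ.2 b, sum_mumP κ b⟩,
    trace_mumP κ, fun b b' n n' hb => ?_, fun b n n' => ?_⟩
  · rw [trace_mumP_mul_mumP, trace_pauli_mul_pauli, if_neg hb]
    norm_num
  · rw [trace_mumP_mul_mumP, trace_pauli_mul_pauli, if_pos rfl, ← Complex.ofReal_mul,
      blochCoeff_mul_blochCoeff hκ.1.le]
    split_ifs <;> push_cast <;> ring

lemma sum_mumP_kronecker_map_conj {κ : ℝ} (hκ : 1 / 2 ≤ κ) :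
    ∑ b, ∑ n, mumP κ b n ⊗ₖ (mumP κ b n).map (starRingEnd ℂ)
      = (2⁻¹ : ℂ) • ((3 : ℂ) • 1 + ((2 * κ - 1 : ℝ) : ℂ) •
          (pauli 0 ⊗ₖ pauli 0 - pauli 1 ⊗ₖ pauli 1 + pauli 2 ⊗ₖ pauli 2)) := by
  have hb (b : Fin 3) : ∑ n, mumP κ b n ⊗ₖ (mumP κ b n).map (starRingEnd ℂ)
      = (2⁻¹ : ℂ) • (1 + ((2 * κ - 1 : ℝ) : ℂ) • (pauli b ⊗ₖ (pauli b)ᵀ)) := by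
    have hconj (n : Fin 2) := (isHermitian_mumP κ b n).map_starRingEnd_eq_transpose
    simp only [hconj]
    simp only [Fin.sum_univ_two, mumP_eq, transpose_smul, transpose_add, transpose_one,
      blochCoeff_one, Complex.ofReal_neg]
    rw [half_one_add_smul_kronecker_add_neg, ← Complex.ofReal_mul,
      blochCoeff_mul_blochCoeff hκ, if_pos rfl]
  simp only [hb, ← sum_pauli_kronecker_transpose, Fin.sum_univ_three]
  module

end PauliMUM

/-- The Pauli construction gives a complete set of three MUMs on ℂ², its entrywise
conjugate is one as well, and `∑_{b,n} Tr[(P_n^(b) ⊗ conj(P_n^(b))) ρ] = (3 + (2κ−1)H(ρ))/2`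
for every two-qubit state. -/
theorem mum_pauli_conj_J (κ : ℝ) (hκ : κ ∈ Set.Ioc (1/2 : ℝ) 1) :
    IsCompleteMUM 2 κ (mumP κ) ∧
    IsCompleteMUM 2 κ (fun b n => (mumP κ b n).map (starRingEnd ℂ)) ∧
    ∀ ρ : Matrix (Fin 2 × Fin 2) (Fin 2 × Fin 2) ℂ, IsState ρ →
      ∑ b : Fin 3, ∑ n : Fin 2,
          ((mumP κ b n ⊗ₖ (mumP κ b n).map (starRingEnd ℂ)) * ρ).trace
        = (((3 + (2 * κ - 1) * Hcorr ρ) / 2 : ℝ) : ℂ) := by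
  refine ⟨isCompleteMUM_mumP hκ, (isCompleteMUM_mumP hκ).map_conj, fun ρ ⟨hρ, htrace⟩ => ?_⟩
  simp only [← trace_sum, ← Finset.sum_mul]
  rw [sum_mumP_kronecker_map_conj hκ.1.le, Complex.ofReal_div, Complex.ofReal_add,
    Complex.ofReal_mul, ofReal_Hcorr hρ.isHermitian]
  simp only [Matrix.smul_mul, add_mul, one_mul, trace_smul, trace_add, htrace, smul_eq_mul]
  push_cast
  ring
end
end
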